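/- arXiv:1912.07422 — 3 statements merged into one kernel-verified Lean document; each statement's English description precedes it below -/
import Mathlib

section
/- Let 0 < ρ < 1 and let α ∈ (0,1) be the unique solution of x^x (1−x)^{1−x} = ρ^x. Then lim_{N→∞} E(H_N)/N = α. -/
open Finset Filter Real Topology

/-- `r_{ρ,n}(i) = ρ^{-i} * C(n-1, i)^{-1}`. -/
noncomputable def rfun (ρ : ℝ) (n i : ℕ) : ℝ := (ρ ^ i * (Nat.choose (n - 1) i : ℝ))⁻¹

/-- `P(H_N ≥ k)` for `k = 1,…,N`, and `0` for `k > N`. -/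
noncomputable def tailP (ρ : ℝ) (N k : ℕ) : ℝ :=
  if k ≤ N then (∑ i ∈ Finset.range k, rfun ρ N i)⁻¹ else 0

/-- `P(H_N = k) = P(H_N ≥ k) − P(H_N ≥ k+1)`. -/
noncomputable def pmfP (ρ : ℝ) (N k : ℕ) : ℝ := tailP ρ N k - tailP ρ N (k + 1)

/-- `E(H_N) = ∑_{k=1}^N P(H_N ≥ k)`. -/
noncomputable def EH (ρ : ℝ) (N : ℕ) : ℝ := ∑ k ∈ Finset.Icc 1 N, tailP ρ N k

/-- `Var(H_N) = ∑_{k=1}^N (k − E(H_N))² P(H_N = k)`. -/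
noncomputable def VarH (ρ : ℝ) (N : ℕ) : ℝ :=
  ∑ k ∈ Finset.Icc 1 N, ((k : ℝ) - EH ρ N) ^ 2 * pmfP ρ N k

/-- `P(H_N ≤ t)` for a real threshold `t`. -/
noncomputable def cdfP (ρ : ℝ) (N : ℕ) (t : ℝ) : ℝ :=
  ∑ k ∈ (Finset.Icc 1 N).filter (fun k : ℕ => (k : ℝ) ≤ t), pmfP ρ N k

/-!
Write `n = N - 1`, so that `P(H_N ≥ k)⁻¹ = ∑_{i<k} (ρ^i C(n,i))⁻¹`. Up to a factor `n + 1`,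
`ρ^i C(n,i) = exp (n h(i/n))` with `h x = x log ρ + H(x)`, `H` the binary entropy; the sharp
lower bound comes from the binomial distribution of mean `i` having its mode at `i`. The function
`h` is strictly concave with `h 0 = h α = 0`, hence positive on `(0, α)` and negative on `(α, 1]`.

For `k > (α + ε) N` the last summand alone makes `P(H_N ≥ k)` exponentially small, so
`E(H_N) ≤ (α + ε) N + o(N)`. For `k ≤ (α - ε) N` every summand with `i ≥ 1` is small: geometrically
in `i` while `i ≤ ρ n / 2`, where `C(n,i) ≥ (n/i)^i` suffices, and exponentially in `n` beyond.
So `P(H_N ≥ k) → 1` uniformly there and `E(H_N) ≥ (α - ε) N (1 - o(1))`.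
-/

theorem Nat.pow_le_pow_mul_choose {n i : ℕ} (h : i ≤ n) : n ^ i ≤ i ^ i * n.choose i := by
  have key : n ^ i * i.descFactorial i ≤ i ^ i * n.descFactorial i := by
    simp only [Nat.descFactorial_eq_prod_range]
    calc n ^ i * ∏ j ∈ range i, (i - j) = ∏ j ∈ range i, n * (i - j) := by
          rw [prod_mul_distrib, prod_const, card_range]
      _ ≤ ∏ j ∈ range i, i * (n - j) := prod_le_prod' fun j hj => by
          have hj : j < i := mem_range.1 hj
          zify [hj.le, (hj.trans_le h).le]
          nlinarith
      _ = i ^ i * ∏ j ∈ range i, (n - j) := by rw [prod_mul_distrib, prod_const, card_range]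
  rw [Nat.descFactorial_self, Nat.descFactorial_eq_factorial_mul_choose, mul_left_comm] at key
  exact Nat.le_of_mul_le_mul_right (by linarith) (Nat.factorial_pos i)

theorem StrictConcaveOn.mul_apply_lt_apply_mul {f : ℝ → ℝ} {s : Set ℝ}
    (hf : StrictConcaveOn ℝ s f) (h0 : 0 ∈ s) (hf0 : f 0 = 0) {x t : ℝ} (hx : x ∈ s)
    (hx0 : x ≠ 0) (ht0 : 0 < t) (ht1 : t < 1) : t * f x < f (t * x) := by
  simpa [hf0] using hf.2 h0 hx hx0.symm (sub_pos.2 ht1) ht0 (by ring)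

theorem apply_le_of_unimodal {α : Type*} [Preorder α] {f : ℕ → α} {i : ℕ}
    (hup : ∀ j < i, f j ≤ f (j + 1)) (hdown : ∀ j ≥ i, f (j + 1) ≤ f j) (j : ℕ) :
    f j ≤ f i := by
  rcases le_total j i with hji | hij
  · have hmono : Monotone fun k => f (min k i) := monotone_nat_of_le_succ fun k => by
      rcases lt_or_ge k i with hk | hk
      · simpa [min_eq_left hk.le, min_eq_left (Nat.succ_le_of_lt hk)] using hup k hk
      · simp [min_eq_right hk, min_eq_right (hk.trans (Nat.le_succ k))]
    simpa [min_eq_left hji] using hmono hji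
  · exact Nat.rel_of_forall_rel_succ_of_le_of_le (· ≥ ·) hdown le_rfl hij

noncomputable def binomialWeight (n : ℕ) (p : ℝ) (j : ℕ) : ℝ :=
  n.choose j * p ^ j * (1 - p) ^ (n - j)

section binomialWeight

variable {n : ℕ} {p : ℝ}

lemma sum_binomialWeight (n : ℕ) (p : ℝ) :
    ∑ j ∈ range (n + 1), binomialWeight n p j = 1 := by
  have h := (add_pow p (1 - p) n).symm
  rw [add_sub_cancel, one_pow] at h
  rw [← h]
  exact sum_congr rfl fun j _ => by rw [binomialWeight]; ring

lemma binomialWeight_nonneg (hp0 : 0 ≤ p) (hp1 : p ≤ 1) (j : ℕ) :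
    0 ≤ binomialWeight n p j := by
  unfold binomialWeight
  have : 0 ≤ 1 - p := sub_nonneg.2 hp1
  positivity

lemma binomialWeight_le_one (hp0 : 0 ≤ p) (hp1 : p ≤ 1) (j : ℕ) :
    binomialWeight n p j ≤ 1 := by
  rcases lt_or_ge n j with hnj | hjn
  · simp [binomialWeight, Nat.choose_eq_zero_of_lt hnj]
  · rw [← sum_binomialWeight n p]
    exact single_le_sum (fun j _ => binomialWeight_nonneg hp0 hp1 j)
      (mem_range.2 (Nat.lt_succ_of_le hjn))

lemma binomialWeight_succ_mul {j : ℕ} (hj : j < n) :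
    binomialWeight n p (j + 1) * ((j + 1) * (1 - p)) =
      binomialWeight n p j * ((n - j) * p) := by
  have hchoose : (n.choose (j + 1) : ℝ) * (j + 1) = n.choose j * (n - j) := by
    rw [← Nat.cast_sub hj.le]
    exact_mod_cast Nat.choose_succ_right_eq n j
  rw [binomialWeight, binomialWeight, show n - j = n - (j + 1) + 1 by omega, pow_succ, pow_succ]
  linear_combination p * (1 - p) * p ^ j * (1 - p) ^ (n - (j + 1)) * hchoose

lemma binomialWeight_le_of_mul_eq {i : ℕ} (hp : n * p = i) (hin : i < n) (j : ℕ) :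
    binomialWeight n p j ≤ binomialWeight n p i := by
  have hn : (0 : ℝ) < n := by exact_mod_cast (Nat.zero_le i).trans_lt hin
  have hp0 : 0 ≤ p := by nlinarith [(Nat.cast_nonneg i : (0 : ℝ) ≤ i)]
  have hq : 0 < 1 - p := by
    have : (i : ℝ) < n := by exact_mod_cast hin
    nlinarith
  -- `(n - j) p - (j + 1) (1 - p) = i - j - 1 + p`, which changes sign at `j = i`.
  have hstep (j : ℕ) (hj : j < n) : (binomialWeight n p (j + 1) - binomialWeight n p j) *
      ((j + 1) * (1 - p)) = binomialWeight n p j * (i - j - 1 + p) := by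
    linear_combination binomialWeight_succ_mul (p := p) hj + binomialWeight n p j * hp
  have hw := binomialWeight_nonneg (n := n) hp0 (sub_pos.1 hq).le
  have hpos (j : ℕ) : 0 < ((j : ℝ) + 1) * (1 - p) := by positivity
  refine apply_le_of_unimodal (fun j hj => ?_) (fun j hj => ?_) j
  · have hsign : 0 ≤ (i : ℝ) - j - 1 + p := by
      have : (j : ℝ) + 1 ≤ i := by exact_mod_cast hj
      linarith
    exact sub_nonneg.1 <| (mul_nonneg_iff_of_pos_right (hpos j)).1 <|
      hstep j (hj.trans hin) ▸ mul_nonneg (hw j) hsign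
  · rcases lt_or_ge j n with hjn | hjn
    · have hsign : (i : ℝ) - j - 1 + p ≤ 0 := by
        have : (i : ℝ) ≤ j := by exact_mod_cast hj
        linarith
      exact sub_nonpos.1 <| nonpos_of_mul_nonpos_left
        (hstep j hjn ▸ mul_nonpos_of_nonneg_of_nonpos (hw j) hsign) (hpos j)
    · simpa [binomialWeight, Nat.choose_eq_zero_of_lt (Nat.lt_succ_of_le hjn)] using hw j

lemma one_le_succ_mul_binomialWeight_div {i : ℕ} (hi : i ≤ n) :
    1 ≤ (n + 1) * binomialWeight n (i / n) i := by
  rcases hi.lt_or_eq with hin | rfl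
  · have hp : (n : ℝ) * (i / n) = i := mul_div_cancel₀ _ (Nat.cast_ne_zero.2 (by omega))
    calc (1 : ℝ) = ∑ j ∈ range (n + 1), binomialWeight n (i / n) j :=
          (sum_binomialWeight n _).symm
      _ ≤ ∑ j ∈ range (n + 1), binomialWeight n (i / n) i :=
          sum_le_sum fun j _ => binomialWeight_le_of_mul_eq hp hin j
      _ = (n + 1) * binomialWeight n (i / n) i := by simp
  · rcases Nat.eq_zero_or_pos i with rfl | hi
    · simp [binomialWeight]
    · rw [div_self (by positivity)]
      simp [binomialWeight]

end binomialWeight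

lemma exp_mul_binEntropy_mul_binomialWeight {n i : ℕ} (hi : i ≤ n) :
    exp (n * binEntropy (i / n)) * binomialWeight n (i / n) i = n.choose i := by
  rcases Nat.eq_zero_or_pos i with rfl | hi0
  · simp [binomialWeight]
  rcases hi.lt_or_eq with hin | rfl
  · set p : ℝ := i / n with hp_def
    have hn : (0 : ℝ) < n := by exact_mod_cast hi0.trans hin
    have hp0 : 0 < p := by positivity
    have hp1 : p < 1 := (div_lt_one hn).2 (by exact_mod_cast hin)
    have hq : 0 < 1 - p := sub_pos.2 hp1
    have hnp : (n : ℝ) * binEntropy p =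
        i * log p⁻¹ + ((n - i : ℕ) : ℝ) * log (1 - p)⁻¹ := by
      rw [binEntropy, Nat.cast_sub hin.le, hp_def]
      field_simp
    rw [hnp, exp_add, exp_nat_mul, exp_nat_mul, exp_log (by positivity),
      exp_log (inv_pos.2 hq), binomialWeight, inv_pow, inv_pow]
    field_simp
  · rw [div_self (by positivity)]
    simp [binomialWeight]

/-- The exponential growth rate of `ρ ^ i * C(n, i)` at `i = x n`: it is
`log (ρ ^ x / (x ^ x * (1 - x) ^ (1 - x)))`, so `α` is its zero in `(0, 1)`. -/
noncomputable def heightRate (ρ x : ℝ) : ℝ := binEntropy x + x * log ρ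

section heightRate

variable {ρ : ℝ}

@[simp] lemma heightRate_zero (ρ : ℝ) : heightRate ρ 0 = 0 := by simp [heightRate]

lemma continuous_heightRate (ρ : ℝ) : Continuous (heightRate ρ) :=
  binEntropy_continuous.add (continuous_id.mul continuous_const)

lemma strictConcaveOn_heightRate (ρ : ℝ) : StrictConcaveOn ℝ (Set.Icc 0 1) (heightRate ρ) :=
  strictConcave_binEntropy.add_concaveOn
    ⟨convex_Icc 0 1, fun _ _ _ _ _ _ _ _ _ => le_of_eq (by simp only [smul_eq_mul]; ring)⟩

lemma heightRate_eq_zero {α : ℝ} (hρ : 0 < ρ) (hα : α ∈ Set.Ioo (0 : ℝ) 1)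
    (hsol : α ^ α * (1 - α) ^ (1 - α) = ρ ^ α) : heightRate ρ α = 0 := by
  have hq : 0 < 1 - α := sub_pos.2 hα.2
  have hlog := congrArg log hsol
  rw [log_mul (rpow_pos_of_pos hα.1 _).ne' (rpow_pos_of_pos hq _).ne', log_rpow hα.1,
    log_rpow hq, log_rpow hρ] at hlog
  rw [heightRate, binEntropy, log_inv, log_inv]
  linarith

lemma heightRate_pos_of_lt {α x : ℝ} (hα1 : α ≤ 1) (hzero : heightRate ρ α = 0)
    (hx0 : 0 < x) (hxα : x < α) : 0 < heightRate ρ x := by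
  have hα0 : 0 < α := hx0.trans hxα
  have h := (strictConcaveOn_heightRate ρ).mul_apply_lt_apply_mul (by simp) (heightRate_zero ρ)
    ⟨hα0.le, hα1⟩ hα0.ne' (div_pos hx0 hα0) ((div_lt_one hα0).2 hxα)
  rwa [hzero, mul_zero, div_mul_cancel₀ _ hα0.ne'] at h

lemma heightRate_neg_of_lt {α x : ℝ} (hα0 : 0 < α) (hzero : heightRate ρ α = 0)
    (hαx : α < x) (hx1 : x ≤ 1) : heightRate ρ x < 0 := by
  have hx0 : 0 < x := hα0.trans hαx
  have h := (strictConcaveOn_heightRate ρ).mul_apply_lt_apply_mul (by simp) (heightRate_zero ρ)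
    ⟨hx0.le, hx1⟩ hx0.ne' (div_pos hα0 hx0) ((div_lt_one hx0).2 hαx)
  rw [div_mul_cancel₀ _ hx0.ne', hzero] at h
  exact neg_of_mul_neg_right h (div_pos hα0 hx0).le

lemma exp_mul_heightRate (hρ : 0 < ρ) {n i : ℕ} (hi : i ≤ n) :
    exp (n * heightRate ρ (i / n)) = ρ ^ i * exp (n * binEntropy (i / n)) := by
  have hni : (n : ℝ) * (i / n) = i := by
    rcases Nat.eq_zero_or_pos n with rfl | hn
    · simp [Nat.le_zero.1 hi]
    · exact mul_div_cancel₀ _ (by positivity)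
  rw [heightRate, mul_add, exp_add, ← mul_assoc, hni, ← log_pow, exp_log (pow_pos hρ i),
    mul_comm]

lemma rho_pow_mul_choose_le_exp (hρ : 0 < ρ) {n i : ℕ} (hi : i ≤ n) :
    ρ ^ i * n.choose i ≤ exp (n * heightRate ρ (i / n)) := by
  have hw : binomialWeight n (i / n) i ≤ 1 :=
    binomialWeight_le_one (by positivity)
      (div_le_one_of_le₀ (by exact_mod_cast hi) (by positivity)) i
  rw [exp_mul_heightRate hρ hi, ← exp_mul_binEntropy_mul_binomialWeight hi]
  gcongr
  exact mul_le_of_le_one_right (exp_pos _).le hw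

lemma exp_le_succ_mul_rho_pow_mul_choose (hρ : 0 < ρ) {n i : ℕ} (hi : i ≤ n) :
    exp (n * heightRate ρ (i / n)) ≤ (n + 1) * (ρ ^ i * n.choose i) := by
  have hw := one_le_succ_mul_binomialWeight_div hi
  rw [exp_mul_heightRate hρ hi, ← exp_mul_binEntropy_mul_binomialWeight hi]
  have : 0 < ρ ^ i * exp (n * binEntropy (i / n)) := by positivity
  nlinarith

end heightRate

section tail

variable {ρ : ℝ}

lemma rfun_succ (ρ : ℝ) (n i : ℕ) : rfun ρ (n + 1) i = (ρ ^ i * n.choose i)⁻¹ := by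
  simp [rfun]

lemma rfun_nonneg (hρ : 0 < ρ) (N i : ℕ) : 0 ≤ rfun ρ N i := by
  unfold rfun
  positivity

lemma one_le_sum_rfun (hρ : 0 < ρ) {N k : ℕ} (hk : 1 ≤ k) :
    1 ≤ ∑ i ∈ range k, rfun ρ N i := by
  simpa [rfun] using single_le_sum (fun i _ => rfun_nonneg hρ N i) (mem_range.2 hk)

lemma tailP_le_one (hρ : 0 < ρ) {N k : ℕ} (hk : 1 ≤ k) : tailP ρ N k ≤ 1 := by
  unfold tailP
  split_ifs
  · exact inv_le_one_of_one_le₀ (one_le_sum_rfun hρ hk)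
  · exact zero_le_one

lemma tailP_nonneg (hρ : 0 < ρ) (N k : ℕ) : 0 ≤ tailP ρ N k := by
  unfold tailP
  split_ifs
  · exact inv_nonneg.2 (sum_nonneg fun i _ => rfun_nonneg hρ N i)
  · exact le_rfl

lemma tailP_succ_le (hρ : 0 < ρ) {n k : ℕ} (hk1 : 1 ≤ k) (hk : k ≤ n + 1) :
    tailP ρ (n + 1) k ≤ ρ ^ (k - 1) * n.choose (k - 1) := by
  have hlast : 0 < rfun ρ (n + 1) (k - 1) := by
    rw [rfun_succ]
    have : 0 < n.choose (k - 1) := Nat.choose_pos (by omega)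
    positivity
  rw [tailP, if_pos hk, ← inv_inv (_ * _), ← rfun_succ]
  exact inv_anti₀ hlast
    (single_le_sum (fun i _ => rfun_nonneg hρ _ i) (mem_range.2 (by omega)))

lemma natCast_mul_inv_le_EH (hρ : 0 < ρ) {N k : ℕ} {B : ℝ} (hk : k ≤ N)
    (hB : ∑ i ∈ range k, rfun ρ N i ≤ B) : k * B⁻¹ ≤ EH ρ N := by
  have htail : ∀ j ∈ Icc 1 k, B⁻¹ ≤ tailP ρ N j := fun j hj => by
    obtain ⟨hj1, hjk⟩ := mem_Icc.1 hj
    rw [tailP, if_pos (hjk.trans hk)]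
    refine inv_anti₀ (one_pos.trans_le (one_le_sum_rfun hρ hj1)) (le_trans ?_ hB)
    exact sum_le_sum_of_subset_of_nonneg (range_subset_range.2 hjk)
      fun i _ _ => rfun_nonneg hρ N i
  calc (k : ℝ) * B⁻¹ ≤ ∑ j ∈ Icc 1 k, tailP ρ N j := by
        simpa using card_nsmul_le_sum _ _ _ htail
    _ ≤ EH ρ N := sum_le_sum_of_subset_of_nonneg (Icc_subset_Icc_right hk)
        fun j _ _ => tailP_nonneg hρ N j

lemma rfun_succ_le_pow (hρ : 0 < ρ) {n i : ℕ} (hn : 0 < n) (hi : i ≤ n) :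
    rfun ρ (n + 1) i ≤ (i / (ρ * n)) ^ i := by
  have hchoose : ((n ^ i : ℕ) : ℝ) ≤ ((i ^ i * n.choose i : ℕ) : ℝ) :=
    Nat.cast_le.2 (Nat.pow_le_pow_mul_choose hi)
  have : 0 < n.choose i := Nat.choose_pos hi
  push_cast at hchoose
  rw [rfun_succ, div_pow, mul_pow, inv_eq_one_div,
    div_le_div_iff₀ (by positivity) (by positivity), one_mul, mul_left_comm]
  exact mul_le_mul_of_nonneg_left hchoose (pow_pos hρ i).le

lemma rfun_succ_le_exp (hρ : 0 < ρ) {n i : ℕ} (hi : i ≤ n) :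
    rfun ρ (n + 1) i ≤ (n + 1) * exp (-(n * heightRate ρ (i / n))) := by
  have : 0 < n.choose i := Nat.choose_pos hi
  rw [rfun_succ, exp_neg, ← div_eq_mul_inv, inv_eq_one_div,
    div_le_div_iff₀ (by positivity) (exp_pos _), one_mul]
  exact exp_le_succ_mul_rho_pow_mul_choose hρ hi

end tail

section bounds

variable {ρ : ℝ}

lemma EH_succ_le (hρ : 0 < ρ) {β c : ℝ} (hβ : 0 ≤ β)
    (hc : ∀ x ∈ Set.Icc β 1, heightRate ρ x ≤ -c) {n : ℕ} (hn : 0 < n) :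
    EH ρ (n + 1) ≤ β * (n + 1) + 1 + (n + 1) * exp (-(c * n)) := by
  set k₀ := ⌈β * ((n : ℝ) + 1)⌉₊
  have htail (k : ℕ) (hk : k ∈ Icc 1 (n + 1)) (hk₀ : ¬k ≤ k₀) :
      tailP ρ (n + 1) k ≤ exp (-(c * n)) := by
    obtain ⟨hk1, hkn⟩ := mem_Icc.1 hk
    have hx : ((k - 1 : ℕ) : ℝ) / n ∈ Set.Icc β 1 := by
      refine ⟨(le_div_iff₀ (by positivity)).2 ?_,
        div_le_one_of_le₀ (by exact_mod_cast (by omega : k - 1 ≤ n)) (by positivity)⟩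
      have : β * (n + 1) ≤ ((k - 1 : ℕ) : ℝ) :=
        (Nat.le_ceil _).trans (Nat.cast_le.2 (by omega : k₀ ≤ k - 1))
      nlinarith
    calc tailP ρ (n + 1) k ≤ ρ ^ (k - 1) * n.choose (k - 1) := tailP_succ_le hρ hk1 hkn
      _ ≤ exp (n * heightRate ρ ((k - 1 : ℕ) / n)) := rho_pow_mul_choose_le_exp hρ (by omega)
      _ ≤ exp (-(c * n)) := exp_le_exp.2 (by nlinarith [hc _ hx])
  have hlow :
      ∑ k ∈ (Icc 1 (n + 1)).filter (· ≤ k₀), tailP ρ (n + 1) k ≤ β * (n + 1) + 1 :=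
    calc _ ≤ ∑ k ∈ (Icc 1 (n + 1)).filter (· ≤ k₀), (1 : ℝ) :=
          sum_le_sum fun k hk => tailP_le_one hρ (mem_Icc.1 (mem_filter.1 hk).1).1
      _ ≤ ∑ k ∈ Icc 1 k₀, (1 : ℝ) := sum_le_sum_of_subset_of_nonneg
          (fun k hk => by simp only [mem_filter, mem_Icc] at hk ⊢; omega) fun _ _ _ => zero_le_one
      _ ≤ β * (n + 1) + 1 := by
          simpa using (Nat.ceil_lt_add_one (by positivity : 0 ≤ β * (n + 1))).le
  have hhigh : ∑ k ∈ (Icc 1 (n + 1)).filter (¬· ≤ k₀), tailP ρ (n + 1) k ≤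
      (n + 1) * exp (-(c * n)) :=
    calc _ ≤ ∑ k ∈ (Icc 1 (n + 1)).filter (¬· ≤ k₀), exp (-(c * n)) :=
          sum_le_sum fun k hk => htail k (mem_filter.1 hk).1 (mem_filter.1 hk).2
      _ ≤ ∑ k ∈ Icc 1 (n + 1), exp (-(c * n)) :=
          sum_le_sum_of_subset_of_nonneg (filter_subset _ _) fun _ _ _ => (exp_pos _).le
      _ = (n + 1) * exp (-(c * n)) := by simp
  rw [EH, ← sum_filter_add_sum_filter_not (Icc 1 (n + 1)) (· ≤ k₀)]
  linarith

lemma rfun_succ_le_geometric_add_exp (hρ : 0 < ρ) {β γ c : ℝ} (hβ : β ≤ 1)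
    (hγ : γ ≤ ρ / 2) (hc : ∀ x ∈ Set.Icc γ β, c ≤ heightRate ρ x) {n i : ℕ}
    (hn : 0 < n) (hi1 : 1 ≤ i) (hi : (i : ℝ) ≤ β * n) :
    rfun ρ (n + 1) i ≤ 2 / (ρ * n) * (i * (1 / 2) ^ i) + (n + 1) * exp (-(c * n)) := by
  have hnr : (0 : ℝ) < n := by exact_mod_cast hn
  have hin : i ≤ n := by
    have : (i : ℝ) ≤ n := hi.trans (by nlinarith)
    exact_mod_cast this
  by_cases hγi : γ ≤ i / n
  · have hx : (i : ℝ) / n ∈ Set.Icc γ β := ⟨hγi, (div_le_iff₀ hnr).2 hi⟩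
    calc rfun ρ (n + 1) i ≤ (n + 1) * exp (-(n * heightRate ρ (i / n))) :=
          rfun_succ_le_exp hρ hin
      _ ≤ (n + 1) * exp (-(c * n)) :=
          mul_le_mul_of_nonneg_left (exp_le_exp.2 (by nlinarith [hc _ hx])) (by positivity)
      _ ≤ _ := le_add_of_nonneg_left (by positivity)
  · have hsmall : (i : ℝ) / (ρ * n) ≤ 1 / 2 := by
      rw [div_le_iff₀ (by positivity)]
      rw [not_le, div_lt_iff₀ hnr] at hγi
      nlinarith
    calc rfun ρ (n + 1) i ≤ (i / (ρ * n)) ^ i := rfun_succ_le_pow hρ hn hin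
      _ = (i / (ρ * n)) * (i / (ρ * n)) ^ (i - 1) := by rw [← pow_succ', Nat.sub_add_cancel hi1]
      _ ≤ (i / (ρ * n)) * (1 / 2) ^ (i - 1) := by gcongr
      _ = 2 / (ρ * n) * (i * ((1 / 2) ^ (i - 1) * (1 / 2))) := by field_simp
      _ = 2 / (ρ * n) * (i * (1 / 2) ^ i) := by rw [← pow_succ, Nat.sub_add_cancel hi1]
      _ ≤ _ := le_add_of_nonneg_right (by positivity)

lemma sum_rfun_succ_le (hρ : 0 < ρ) {β γ c : ℝ} (hβ : β ≤ 1) (hγ : γ ≤ ρ / 2)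
    (hc : ∀ x ∈ Set.Icc γ β, c ≤ heightRate ρ x) {n k : ℕ} (hn : 0 < n)
    (hk : (k : ℝ) ≤ β * n + 1) :
    ∑ i ∈ range k, rfun ρ (n + 1) i ≤ 1 + 4 / (ρ * n) + (n + 1) ^ 2 * exp (-(c * n)) := by
  rcases k with _ | m
  · simp only [range_zero, sum_empty]
    positivity
  have hm : (m : ℝ) ≤ β * n := by push_cast at hk; linarith
  have hgeom : ∑ i ∈ range m, ((i + 1 : ℕ) : ℝ) * (1 / 2) ^ (i + 1) ≤ 2 := by
    have hsum := hasSum_coe_mul_geometric_of_norm_lt_one (𝕜 := ℝ) (r := 1 / 2) (by norm_num)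
    have := sum_le_hasSum (range (m + 1)) (fun _ _ => by positivity) hsum
    rw [sum_range_succ'] at this
    norm_num at this ⊢
    linarith
  have hterm (i : ℕ) (hi : i ∈ range m) : rfun ρ (n + 1) (i + 1) ≤
      2 / (ρ * n) * ((i + 1 : ℕ) * (1 / 2) ^ (i + 1)) + (n + 1) * exp (-(c * n)) :=
    rfun_succ_le_geometric_add_exp hρ hβ hγ hc hn (by omega)
      ((Nat.cast_le.2 (mem_range.1 hi)).trans hm)
  have hmn : (m : ℝ) ≤ n + 1 := by nlinarith
  rw [sum_range_succ']
  calc ∑ i ∈ range m, rfun ρ (n + 1) (i + 1) + rfun ρ (n + 1) 0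
      ≤ ∑ i ∈ range m, (2 / (ρ * n) * ((i + 1 : ℕ) * (1 / 2) ^ (i + 1)) +
          (n + 1) * exp (-(c * n))) + 1 := by
        gcongr with i hi
        · exact hterm i hi
        · simp [rfun]
    _ = 2 / (ρ * n) * ∑ i ∈ range m, ((i + 1 : ℕ) : ℝ) * (1 / 2) ^ (i + 1) +
          m * ((n + 1) * exp (-(c * n))) + 1 := by
        rw [sum_add_distrib, mul_sum]; simp
    _ ≤ 2 / (ρ * n) * 2 + (n + 1) * ((n + 1) * exp (-(c * n))) + 1 := by
        gcongr
    _ = _ := by ring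

lemma div_le_EH_succ (hρ : 0 < ρ) {β γ c : ℝ} (hβ0 : 0 ≤ β) (hβ1 : β ≤ 1)
    (hγ : γ ≤ ρ / 2) (hc : ∀ x ∈ Set.Icc γ β, c ≤ heightRate ρ x) {n : ℕ}
    (hn : 0 < n) :
    (β * (n + 1) - 1) / (1 + 4 / (ρ * n) + (n + 1) ^ 2 * exp (-(c * n))) ≤ EH ρ (n + 1) := by
  set k := ⌊β * (n + 1)⌋₊
  have hk : (k : ℝ) ≤ β * (n + 1) := Nat.floor_le (by positivity)
  have hkn : k ≤ n + 1 := by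
    have : (k : ℝ) ≤ n + 1 := hk.trans (by nlinarith)
    exact_mod_cast this
  calc (β * (n + 1) - 1) / (1 + 4 / (ρ * n) + (n + 1) ^ 2 * exp (-(c * n)))
      ≤ k / (1 + 4 / (ρ * n) + (n + 1) ^ 2 * exp (-(c * n))) := by
        gcongr
        exact (Nat.sub_one_lt_floor _).le
    _ ≤ EH ρ (n + 1) := by
        rw [div_eq_mul_inv]
        exact_mod_cast natCast_mul_inv_le_EH hρ hkn
          (sum_rfun_succ_le hρ hβ1 hγ hc hn (by nlinarith))

end bounds

lemma tendsto_exp_neg_mul_natCast {c : ℝ} (hc : 0 < c) :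
    Tendsto (fun n : ℕ => exp (-(c * n))) atTop (𝓝 0) :=
  tendsto_exp_atBot.comp <| tendsto_neg_atTop_atBot.comp <|
    tendsto_natCast_atTop_atTop.const_mul_atTop hc

lemma tendsto_succ_sq_mul_exp_neg_mul_natCast {c : ℝ} (hc : 0 < c) :
    Tendsto (fun n : ℕ => ((n : ℝ) + 1) ^ 2 * exp (-(c * n))) atTop (𝓝 0) := by
  have hr : |exp (-c)| < 1 := by
    rw [abs_of_pos (exp_pos _), exp_lt_one_iff]
    linarith
  have h := ((tendsto_pow_const_mul_const_pow_of_abs_lt_one 2 hr).comp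
    (tendsto_add_atTop_nat 1)).const_mul (exp (-c))⁻¹
  rw [mul_zero] at h
  refine h.congr fun n => ?_
  rw [Function.comp_apply, pow_succ, ← exp_nat_mul]
  push_cast
  field_simp
  rw [← exp_add]
  ring_nf

section asymptotics

variable {ρ α : ℝ}

lemma eventually_EH_succ_div_lt (hρ : 0 < ρ) (hα : α ∈ Set.Ioo (0 : ℝ) 1)
    (hzero : heightRate ρ α = 0) {b : ℝ} (hb : α < b) :
    ∀ᶠ n : ℕ in atTop, EH ρ (n + 1) / (n + 1) < b := by
  set β := (α + min b 1) / 2 with hβ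
  have hαβ : α < β := by have := lt_min hb hα.2; linarith [hβ]
  have hβb : β < b := by have := min_le_left b 1; linarith [hβ]
  obtain ⟨c, hc0, hc⟩ :=
    isCompact_Icc.exists_forall_le' (continuous_heightRate ρ).neg.continuousOn
      fun x hx => neg_pos.2 (heightRate_neg_of_lt hα.1 hzero (hαβ.trans_le hx.1) hx.2)
  have hlim : Tendsto (fun n : ℕ => β + 1 / ((n : ℝ) + 1) + exp (-(c * n))) atTop
      (𝓝 (β + 0 + 0)) :=
    (tendsto_one_div_add_atTop_nhds_zero_nat.const_add β).add (tendsto_exp_neg_mul_natCast hc0)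
  rw [add_zero, add_zero] at hlim
  filter_upwards [hlim.eventually_lt_const hβb, eventually_gt_atTop 0] with n hlt hn
  refine lt_of_le_of_lt ?_ hlt
  have := EH_succ_le hρ (hα.1.trans hαβ).le (fun x hx => le_neg_of_le_neg (hc x hx)) hn
  rw [div_le_iff₀ (by positivity)]
  calc EH ρ (n + 1) ≤ β * (n + 1) + 1 + (n + 1) * exp (-(c * n)) := this
    _ = (β + 1 / ((n : ℝ) + 1) + exp (-(c * n))) * (n + 1) := by field_simp

lemma eventually_lt_EH_succ_div (hρ : 0 < ρ) (hα : α ∈ Set.Ioo (0 : ℝ) 1)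
    (hzero : heightRate ρ α = 0) {a : ℝ} (ha : a < α) :
    ∀ᶠ n : ℕ in atTop, a < EH ρ (n + 1) / (n + 1) := by
  set β := (max a 0 + α) / 2 with hβ
  have haβ : a < β := by have := le_max_left a 0; linarith [hβ]
  have hβ0 : 0 < β := by have := le_max_right a 0; linarith [hα.1, hβ]
  have hβα : β < α := by have := max_lt ha hα.1; linarith [hβ]
  set γ := min (ρ / 2) β
  have hγ0 : 0 < γ := lt_min (half_pos hρ) hβ0
  obtain ⟨c, hc0, hc⟩ :=
    isCompact_Icc.exists_forall_le' (continuous_heightRate ρ).continuousOn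
      fun x (hx : x ∈ Set.Icc γ β) =>
        heightRate_pos_of_lt hα.2.le hzero (hγ0.trans_le hx.1) (hx.2.trans_lt hβα)
  set D : ℕ → ℝ := fun n => 1 + 4 / (ρ * n) + ((n : ℝ) + 1) ^ 2 * exp (-(c * n))
  have hDlim : Tendsto D atTop (𝓝 (1 + 0 + 0)) :=
    (((tendsto_const_div_atTop_nhds_zero_nat (4 / ρ)).congr fun n : ℕ =>
      div_div 4 ρ (n : ℝ)).const_add 1).add (tendsto_succ_sq_mul_exp_neg_mul_natCast hc0)
  have hlim : Tendsto (fun n : ℕ => (β - 1 / ((n : ℝ) + 1)) / D n) atTop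
      (𝓝 ((β - 0) / (1 + 0 + 0))) :=
    (tendsto_one_div_add_atTop_nhds_zero_nat.const_sub β).div hDlim (by norm_num)
  rw [sub_zero, add_zero, add_zero, div_one] at hlim
  filter_upwards [hlim.eventually_const_lt haβ, eventually_gt_atTop 0] with n hlt hn
  refine hlt.trans_le ?_
  have := div_le_EH_succ hρ hβ0.le (hβα.trans hα.2).le (min_le_left _ _) hc hn
  rw [le_div_iff₀ (by positivity)]
  calc (β - 1 / ((n : ℝ) + 1)) / D n * (n + 1) = (β * (n + 1) - 1) / D n := by
        field_simp
    _ ≤ EH ρ (n + 1) := this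

end asymptotics

theorem mean_height_asymptotics_rho_lt_one_general (ρ α : ℝ) (hρ0 : 0 < ρ)
    (hα : α ∈ Set.Ioo (0 : ℝ) 1)
    (hsol : α ^ α * (1 - α) ^ (1 - α) = ρ ^ α) :
    Tendsto (fun N : ℕ => EH ρ N / N) atTop (𝓝 α) := by
  have hzero := heightRate_eq_zero hρ0 hα hsol
  refine (tendsto_add_atTop_iff_nat 1).1 (tendsto_order.2 ⟨fun a ha => ?_, fun b hb => ?_⟩)
  · simpa using eventually_lt_EH_succ_div hρ0 hα hzero ha
  · simpa using eventually_EH_succ_div_lt hρ0 hα hzero hb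

theorem mean_height_asymptotics_rho_lt_one (ρ α : ℝ) (hρ0 : 0 < ρ) (hρ1 : ρ < 1)
    (hα : α ∈ Set.Ioo (0 : ℝ) 1)
    (hsol : α ^ α * (1 - α) ^ (1 - α) = ρ ^ α)
    (huniq : ∀ x ∈ Set.Ioo (0 : ℝ) 1, x ^ x * (1 - x) ^ (1 - x) = ρ ^ x → x = α) :
    Tendsto (fun N : ℕ => EH ρ N / N) atTop (𝓝 α) :=
  mean_height_asymptotics_rho_lt_one_general ρ α hρ0 hα hsol
end

section
/- For every ρ ∈ (0,1) the equation x^x (1−x)^{1−x} = ρ^x has a unique solution x in the open interval (0,1), and this solution α satisfies ρ < α < 1. -/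
open Finset Filter Real Topology

/-!
Taking logarithms, the equation reads `φ x = 0` for `φ x = H x + x log ρ`, where `H` is the binary
entropy. Since `φ` is strictly concave on `[0, 1]` and `φ 0 = 0`, it has at most one zero in
`(0, 1]`; and `φ ρ = -(1 - ρ) log (1 - ρ) > 0 > log ρ = φ 1`, so that zero exists and lies in
`(ρ, 1)`.
-/

theorem StrictConcaveOn.eq_of_map_eq_of_lt {𝕜 β : Type*} [Field 𝕜] [LinearOrder 𝕜]
    [IsStrictOrderedRing 𝕜] [AddCommMonoid β] [LinearOrder β] [IsOrderedAddMonoid β]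
    [Module 𝕜 β] [PosSMulStrictMono 𝕜 β] {s : Set 𝕜} {f : 𝕜 → β}
    (hf : StrictConcaveOn 𝕜 s f) {x y z : 𝕜} (hx : x ∈ s) (hy : y ∈ s) (hz : z ∈ s)
    (hxy : x < y) (hxz : x < z) (hfy : f y = f x) (hfz : f z = f x) : y = z := by
  wlog hyz : y < z generalizing y z
  · rcases (not_lt.mp hyz).eq_or_lt with h | h
    · exact h.symm
    · exact (this hz hy hxz hxy hfz hfy h).symm
  have := hf.lt_on_openSegment hx hz hxz.ne (by rw [openSegment_eq_Ioo hxz]; exact ⟨hxy, hyz⟩)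
  simp [hfy, hfz] at this

lemma rpow_self_mul_one_sub_rpow_eq_exp_neg_binEntropy {x : ℝ} (hx : x ∈ Set.Ioo (0 : ℝ) 1) :
    x ^ x * (1 - x) ^ (1 - x) = exp (-binEntropy x) := by
  rw [rpow_def_of_pos hx.1, rpow_def_of_pos (sub_pos.mpr hx.2), ← exp_add, binEntropy,
    log_inv, log_inv]
  ring_nf

noncomputable def tiltedBinEntropy (ρ x : ℝ) : ℝ := binEntropy x + x * log ρ

section tiltedBinEntropy

variable {ρ : ℝ}

lemma rpow_self_mul_one_sub_rpow_one_sub_eq_rpow_iff (hρ : 0 < ρ) {x : ℝ}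
    (hx : x ∈ Set.Ioo (0 : ℝ) 1) :
    x ^ x * (1 - x) ^ (1 - x) = ρ ^ x ↔ tiltedBinEntropy ρ x = 0 := by
  rw [rpow_self_mul_one_sub_rpow_eq_exp_neg_binEntropy hx, rpow_def_of_pos hρ, exp_eq_exp,
    tiltedBinEntropy]
  constructor <;> intro h <;> linarith

lemma continuous_tiltedBinEntropy : Continuous (tiltedBinEntropy ρ) := by
  unfold tiltedBinEntropy
  fun_prop

lemma strictConcaveOn_tiltedBinEntropy : StrictConcaveOn ℝ (Set.Icc 0 1) (tiltedBinEntropy ρ) :=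
  strictConcave_binEntropy.add_concaveOn
    (((LinearMap.mul ℝ ℝ).flip (log ρ)).concaveOn (convex_Icc 0 1))

@[simp] lemma tiltedBinEntropy_zero : tiltedBinEntropy ρ 0 = 0 := by
  simp [tiltedBinEntropy]

@[simp] lemma tiltedBinEntropy_one : tiltedBinEntropy ρ 1 = log ρ := by
  simp [tiltedBinEntropy]

lemma tiltedBinEntropy_self_pos (hρ : ρ ∈ Set.Ioo (0 : ℝ) 1) : 0 < tiltedBinEntropy ρ ρ := by
  have hlog : log (1 - ρ) < 0 := log_neg (by linarith [hρ.2]) (by linarith [hρ.1])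
  have : tiltedBinEntropy ρ ρ = -((1 - ρ) * log (1 - ρ)) := by
    rw [tiltedBinEntropy, binEntropy, log_inv, log_inv]
    ring
  rw [this]
  nlinarith [hρ.2]

lemma exists_tiltedBinEntropy_eq_zero (hρ : ρ ∈ Set.Ioo (0 : ℝ) 1) :
    ∃ α ∈ Set.Ioo ρ 1, tiltedBinEntropy ρ α = 0 := by
  have h₁ : tiltedBinEntropy ρ 1 < 0 := by
    rw [tiltedBinEntropy_one]
    exact log_neg hρ.1 hρ.2
  obtain ⟨α, ⟨hρα, hα1⟩, hα⟩ := intermediate_value_Icc' hρ.2.le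
    continuous_tiltedBinEntropy.continuousOn ⟨h₁.le, (tiltedBinEntropy_self_pos hρ).le⟩
  refine ⟨α, ⟨hρα.lt_of_ne ?_, hα1.lt_of_ne ?_⟩, hα⟩
  · rintro rfl
    exact (tiltedBinEntropy_self_pos hρ).ne' hα
  · rintro rfl
    exact h₁.ne hα

end tiltedBinEntropy

theorem alpha_exists_unique (ρ : ℝ) (hρ0 : 0 < ρ) (hρ1 : ρ < 1) :
    ∃ α : ℝ, α ∈ Set.Ioo ρ 1 ∧ α ^ α * (1 - α) ^ (1 - α) = ρ ^ α ∧
      ∀ x ∈ Set.Ioo (0 : ℝ) 1, x ^ x * (1 - x) ^ (1 - x) = ρ ^ x → x = α := by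
  obtain ⟨α, hα, hα_root⟩ := exists_tiltedBinEntropy_eq_zero ⟨hρ0, hρ1⟩
  have hα01 : α ∈ Set.Ioo (0 : ℝ) 1 := ⟨hρ0.trans hα.1, hα.2⟩
  refine ⟨α, hα, (rpow_self_mul_one_sub_rpow_one_sub_eq_rpow_iff hρ0 hα01).mpr hα_root, ?_⟩
  intro x hx hx_eq
  have hx_root := (rpow_self_mul_one_sub_rpow_one_sub_eq_rpow_iff hρ0 hx).mp hx_eq
  exact strictConcaveOn_tiltedBinEntropy.eq_of_map_eq_of_lt (Set.left_mem_Icc.mpr zero_le_one)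
    (Set.Ioo_subset_Icc_self hx) (Set.Ioo_subset_Icc_self hα01) hx.1 hα01.1
    (by rwa [tiltedBinEntropy_zero]) (by rwa [tiltedBinEntropy_zero])
end

section
/- Let 0 < ρ < 1, let α ∈ (0,1) be the unique solution of x^x (1−x)^{1−x} = ρ^x, set h_n = ⌊α(n−1)⌋ and C₂ = 3/(log α − log ρ). Then for all sufficiently large n, r_{ρ,n}(h_n − ⌊C₂ log n⌋) ≤ r_{ρ,n}(h_n) · n^{−3}. -/
/-!
On the window of length `m = ⌊C₂ log n⌋` just below the peak `h ≈ α(n-1)`, the ratios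
`C(n-1, i+1) / C(n-1, i) = (n-1-i)/(i+1)` stay below `β = α⁻¹ - 1/2`, a constant strictly between
`(1-α)/α` and `1/α`. Hence `r(h-m) ≤ (ρβ)^m r(h)`. Since `ρβ < ρ/α = exp (-(log α - log ρ))` and
`C₂ (log α - log ρ) = 3`, the strict gap gives `(ρβ)^m ≤ n^{-3}` for large `n`.
-/

open Finset Filter Real Topology

lemma lt_of_rpow_self_mul_rpow_one_sub_eq {ρ α : ℝ} (hα0 : 0 < α) (hα1 : α < 1)
    (hsol : α ^ α * (1 - α) ^ (1 - α) = ρ ^ α) : ρ < α := by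
  by_contra! hαρ
  have hlt : α ^ α * (1 - α) ^ (1 - α) < α ^ α :=
    mul_lt_of_lt_one_right (rpow_pos_of_pos hα0 α) (rpow_lt_one (by linarith) (by linarith)
      (by linarith))
  exact (hsol ▸ hlt).not_ge (rpow_le_rpow hα0.le hαρ hα0.le)

lemma cast_choose_succ_le_mul {N i : ℕ} {β : ℝ} (hi : i ≤ N) (hratio : (N : ℝ) - i ≤ β * (i + 1)) :
    (N.choose (i + 1) : ℝ) ≤ β * N.choose i := by
  have hrec : (N.choose (i + 1) : ℝ) * (i + 1) = N.choose i * ((N : ℝ) - i) := by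
    rw [← Nat.cast_sub hi]
    exact_mod_cast Nat.choose_succ_right_eq N i
  have hpos : (0 : ℝ) < i + 1 := by positivity
  refine le_of_mul_le_mul_right ?_ hpos
  calc (N.choose (i + 1) : ℝ) * (i + 1) = N.choose i * ((N : ℝ) - i) := hrec
    _ ≤ N.choose i * (β * (i + 1)) := by gcongr
    _ = β * N.choose i * (i + 1) := by ring

lemma cast_choose_le_pow_mul_choose_sub {N h m : ℕ} {β : ℝ} (hβ : 0 ≤ β) (hmh : m ≤ h)
    (hhN : h ≤ N) (hratio : ∀ i ∈ Ico (h - m) h, (N : ℝ) - i ≤ β * (i + 1)) :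
    (N.choose h : ℝ) ≤ β ^ m * N.choose (h - m) := by
  have hgeom := le_geom (u := fun j => (N.choose (h - m + j) : ℝ)) hβ m fun j hj => by
    have hi : h - m + j ∈ Ico (h - m) h := mem_Ico.2 ⟨by omega, by omega⟩
    simpa only [← add_assoc, Nat.cast_add] using cast_choose_succ_le_mul (by omega) (hratio _ hi)
  simpa [Nat.sub_add_cancel hmh] using hgeom

lemma sub_le_mul_succ_of_floor_sub_le {α β t : ℝ} {N i : ℕ} (hβ : 0 ≤ β) (ht : 0 ≤ t)
    (hwidth : 1 + (1 + β) * t ≤ (α * β - (1 - α)) * N) (hi : ⌊α * N⌋₊ - ⌊t⌋₊ ≤ i) :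
    (N : ℝ) - i ≤ β * (i + 1) := by
  have hi' : (⌊α * N⌋₊ : ℝ) ≤ i + ⌊t⌋₊ := by exact_mod_cast Nat.sub_le_iff_le_add.1 hi
  have hlow : α * N - t < i + 1 := by
    linarith [Nat.sub_one_lt_floor (α * N), Nat.floor_le ht]
  nlinarith [mul_le_mul_of_nonneg_left hlow.le hβ]

lemma rfun_sub_le_pow_mul_rfun {ρ β : ℝ} {n h m : ℕ} (hρ : 0 < ρ) (hβ : 0 ≤ β) (hmh : m ≤ h)
    (hh : h ≤ n - 1) (hratio : ∀ i ∈ Ico (h - m) h, ((n - 1 : ℕ) : ℝ) - i ≤ β * (i + 1)) :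
    rfun ρ n (h - m) ≤ (ρ * β) ^ m * rfun ρ n h := by
  have hchoose := cast_choose_le_pow_mul_choose_sub hβ hmh hh hratio
  have hpow : ρ ^ h = ρ ^ (h - m) * ρ ^ m := by rw [← pow_add, Nat.sub_add_cancel hmh]
  have hA : 0 < ρ ^ (h - m) * ((n - 1).choose (h - m) : ℝ) := by
    have := Nat.choose_pos ((Nat.sub_le h m).trans hh)
    positivity
  have hB : 0 < ρ ^ h * ((n - 1).choose h : ℝ) := by
    have := Nat.choose_pos hh
    positivity
  rw [rfun, rfun, ← div_eq_mul_inv, ← one_div, div_le_div_iff₀ hA hB]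
  calc 1 * (ρ ^ h * ((n - 1).choose h : ℝ)) ≤ ρ ^ h * (β ^ m * (n - 1).choose (h - m)) := by
        rw [one_mul]; gcongr
    _ = (ρ * β) ^ m * (ρ ^ (h - m) * (n - 1).choose (h - m)) := by rw [hpow, mul_pow]; ring

lemma eventually_add_mul_log_le_mul (a b : ℝ) {ε : ℝ} (hε : 0 < ε) :
    ∀ᶠ x : ℝ in atTop, a + b * log x ≤ ε * x := by
  have hlo : (fun x => a + b * log x) =o[atTop] id :=
    (Asymptotics.isLittleO_const_id_atTop a).add (isLittleO_log_id_atTop.const_mul_left b)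
  filter_upwards [hlo.bound hε, eventually_ge_atTop 0] with x hx hx0
  simpa [abs_of_nonneg hx0] using (le_abs_self _).trans hx

lemma eventually_pow_floor_mul_log_le_inv_pow {q c : ℝ} {k : ℕ} (hq0 : 0 < q) (hq1 : q ≤ 1)
    (hk : (k : ℝ) < -c * log q) :
    ∀ᶠ n : ℕ in atTop, q ^ ⌊c * log n⌋₊ ≤ ((n : ℝ) ^ k)⁻¹ := by
  have hlogq : log q ≤ 0 := log_nonpos hq0.le hq1
  have hgap : 0 < -c * log q - k := by linarith
  have hlog : Tendsto (fun n : ℕ => log n) atTop atTop :=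
    tendsto_log_atTop.comp tendsto_natCast_atTop_atTop
  filter_upwards [hlog.eventually_ge_atTop (-log q / (-c * log q - k)), eventually_gt_atTop 0]
    with n hn hn0
  have hnpos : (0 : ℝ) < n := by exact_mod_cast hn0
  set m := ⌊c * log n⌋₊
  have hm : c * log n - 1 < m := Nat.sub_one_lt_floor _
  have hexp : m * log q + k * log n ≤ 0 := by
    have h1 : (c * log n - 1) * log q ≥ m * log q := mul_le_mul_of_nonpos_right hm.le hlogq
    have h2 : -log q ≤ log n * (-c * log q - k) := (div_le_iff₀ hgap).1 hn
    nlinarith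
  rw [← one_div, le_div_iff₀ (by positivity), ← log_nonpos_iff (by positivity),
    log_mul (by positivity) (by positivity), log_pow, log_pow]
  exact hexp

lemma eventually_floor_log_le_floor_and_ratio_le {α β c : ℝ} (hα : 0 < α) (hβ : 0 ≤ β)
    (hαβ : 1 - α < α * β) (hc : 0 ≤ c) :
    ∀ᶠ n : ℕ in atTop, ⌊c * log n⌋₊ ≤ ⌊α * ((n - 1 : ℕ) : ℝ)⌋₊ ∧
      ∀ i ∈ Ico (⌊α * ((n - 1 : ℕ) : ℝ)⌋₊ - ⌊c * log n⌋₊) ⌊α * ((n - 1 : ℕ) : ℝ)⌋₊,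
        ((n - 1 : ℕ) : ℝ) - i ≤ β * (i + 1) := by
  have hε : 0 < α * β - (1 - α) := sub_pos.2 hαβ
  filter_upwards [tendsto_natCast_atTop_atTop.eventually (eventually_add_mul_log_le_mul α c hα),
    tendsto_natCast_atTop_atTop.eventually
      (eventually_add_mul_log_le_mul (1 + (α * β - (1 - α))) ((1 + β) * c) hε),
    eventually_ge_atTop 1] with n hpeak hwindow hn
  have hN : ((n - 1 : ℕ) : ℝ) = n - 1 := by rw [Nat.cast_sub hn, Nat.cast_one]
  have hwidth : 1 + (1 + β) * (c * log n) ≤ (α * β - (1 - α)) * ((n - 1 : ℕ) : ℝ) := by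
    rw [hN]; linarith
  exact ⟨Nat.floor_le_floor (by rw [hN]; linarith), fun i hi =>
    sub_le_mul_succ_of_floor_sub_le hβ (by positivity) hwidth (mem_Ico.1 hi).1⟩

theorem rfun_below_peak_general (ρ α C₂ : ℝ) (hρ0 : 0 < ρ)
    (hα : α ∈ Set.Ioo (0 : ℝ) 1)
    (hsol : α ^ α * (1 - α) ^ (1 - α) = ρ ^ α)
    (hC₂ : C₂ = 3 / (Real.log α - Real.log ρ)) :
    ∀ᶠ n : ℕ in atTop,
      rfun ρ n (⌊α * ((n : ℝ) - 1)⌋₊ - ⌊C₂ * Real.log n⌋₊) ≤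
        rfun ρ n ⌊α * ((n : ℝ) - 1)⌋₊ * ((n : ℝ) ^ 3)⁻¹ := by
  obtain ⟨hα0, hα1⟩ := hα
  have hρα : ρ < α := lt_of_rpow_self_mul_rpow_one_sub_eq hα0 hα1 hsol
  have hL : 0 < log α - log ρ := sub_pos.2 (log_lt_log hρ0 hρα)
  set β := α⁻¹ - 1 / 2 with hβ
  have hαβ : α * β = 1 - α / 2 := by rw [hβ]; field_simp
  have hβ0 : 0 < β := by linarith [one_lt_inv₀ hα0 |>.2 hα1]
  have hq1 : ρ * β ≤ 1 := by nlinarith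
  have hq3 : ((3 : ℕ) : ℝ) < -C₂ * log (ρ * β) := by
    have hlogβ : log β < -log α := by rw [← log_inv]; exact log_lt_log hβ0 (by linarith)
    rw [log_mul hρ0.ne' hβ0.ne', hC₂, neg_mul, ← mul_neg, div_mul_eq_mul_div, lt_div_iff₀ hL]
    push_cast
    linarith
  filter_upwards [eventually_floor_log_le_floor_and_ratio_le hα0 hβ0.le (by linarith)
      (hC₂ ▸ (div_pos three_pos hL).le),
    eventually_pow_floor_mul_log_le_inv_pow (mul_pos hρ0 hβ0) hq1 hq3, eventually_ge_atTop 1]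
    with n ⟨hmh, hratio⟩ hdecay hn
  rw [show (n : ℝ) - 1 = ((n - 1 : ℕ) : ℝ) by rw [Nat.cast_sub hn, Nat.cast_one]]
  have hhN : ⌊α * ((n - 1 : ℕ) : ℝ)⌋₊ ≤ n - 1 :=
    Nat.floor_le_of_le (mul_le_of_le_one_left (Nat.cast_nonneg _) hα1.le)
  calc _ ≤ (ρ * β) ^ ⌊C₂ * log n⌋₊ * rfun ρ n ⌊α * ((n - 1 : ℕ) : ℝ)⌋₊ :=
        rfun_sub_le_pow_mul_rfun hρ0 hβ0.le hmh hhN hratio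
    _ ≤ ((n : ℝ) ^ 3)⁻¹ * rfun ρ n ⌊α * ((n - 1 : ℕ) : ℝ)⌋₊ := by
        gcongr
        exact inv_nonneg.2 (by positivity)
    _ = _ := mul_comm _ _

theorem rfun_below_peak (ρ α C₂ : ℝ) (hρ0 : 0 < ρ) (hρ1 : ρ < 1)
    (hα : α ∈ Set.Ioo (0 : ℝ) 1)
    (hsol : α ^ α * (1 - α) ^ (1 - α) = ρ ^ α)
    (huniq : ∀ x ∈ Set.Ioo (0 : ℝ) 1, x ^ x * (1 - x) ^ (1 - x) = ρ ^ x → x = α)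
    (hC₂ : C₂ = 3 / (Real.log α - Real.log ρ)) :
    ∀ᶠ n : ℕ in atTop,
      rfun ρ n (⌊α * ((n : ℝ) - 1)⌋₊ - ⌊C₂ * Real.log n⌋₊) ≤
        rfun ρ n ⌊α * ((n : ℝ) - 1)⌋₊ * ((n : ℝ) ^ 3)⁻¹ :=
  rfun_below_peak_general ρ α C₂ hρ0 hα hsol hC₂
end
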